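/- arXiv:2509.06267 — 2 statements merged into one kernel-verified Lean document; each statement's English description precedes it below -/
import Mathlib

section
/- Let M be a contract, a ∈ A, and r ∈ R(a;M). Under Assumption 1 (ranked incentives): if there exists r' ∈ R with r ≻_AI r', then there exists (ã,t̃) ∈ M with ã ≤ a and V(r;M) = u_A(ã,r) − t̃; symmetrically, if there exists r' ∈ R with r' ≻_AI r, then there exists (ã,t̃) ∈ M with ã ≥ a and V(r;M) = u_A(ã,r) − t̃. -/
/-!
If `r` is a dual reply at `a` and `(ã, t̃)` attains `V(s;M)`, comparing the dual objective at `r`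
and `s` gives the exchange inequality `u_A(ã,r) - u_A(ã,s) ≤ u_A(a,r) - u_A(a,s)`. Hence if
`r ≻_AI s` every maximiser at `s` has `ã ≤ a`, while if `s ≽_AI r` a maximiser at `s` with
`ã ≤ a` also attains `V(r;M)`. The set of `s ≽_AI r` and the set of `s` admitting a maximiser with
`ã ≤ a` are closed, by continuity of `∂₁u_A` and of `V`; by completeness of `≽_AI` they cover the
interval `R`, the first contains `r` and the second `r'`. Since `R` is connected they meet, and any
common point gives the claim. The case `r' ≻_AI r` is symmetric.
-/

open MeasureTheory Set

/-- The agent's value of optimally choosing a plan from contract `M` given outsider action `r`: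
`V(r;M) = max_{(a,t) ∈ M} (u_A(a,r) - t)`. -/
noncomputable def Vfun (uA : ℝ → ℝ → ℝ) (M : Set (ℝ × ℝ)) (r : ℝ) : ℝ :=
  sSup ((fun p : ℝ × ℝ => uA p.1 r - p.2) '' M)

/-- The dual transfer `T(a;M) = max_{r ∈ R} (u_A(a,r) - V(r;M))`. -/
noncomputable def Tfun (uA : ℝ → ℝ → ℝ) (R : Set ℝ) (M : Set (ℝ × ℝ)) (a : ℝ) : ℝ :=
  sSup ((fun r => uA a r - Vfun uA M r) '' R)

/-- The set of dual replies `R(a;M)`: maximizers of `r ↦ u_A(a,r) - V(r;M)` over `R`. -/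
def dualReplies (uA : ℝ → ℝ → ℝ) (R : Set ℝ) (M : Set (ℝ × ℝ)) (a : ℝ) : Set ℝ :=
  {r | r ∈ R ∧ uA a r - Vfun uA M r = Tfun uA R M a}

/-- A contract is a nonempty compact subset of `A × ℝ` where `A = [a₀, ā]`. -/
def IsContract (a0 abar : ℝ) (M : Set (ℝ × ℝ)) : Prop :=
  M.Nonempty ∧ IsCompact M ∧ M ⊆ (Set.Icc a0 abar) ×ˢ (Set.univ : Set ℝ)

/-- `r₁ ≽_AI r₂`: `r₁` weakly dominates `r₂` in the order of agent incentives, where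
`d1 a r` denotes the partial derivative `∂₁u_A(a,r)`. -/
def succeqAI (d1 : ℝ → ℝ → ℝ) (A : Set ℝ) (r1 r2 : ℝ) : Prop :=
  ∀ a ∈ A, d1 a r2 ≤ d1 a r1

/-- `r₁ ≻_AI r₂`: strict dominance in the order of agent incentives. -/
def succAI (d1 : ℝ → ℝ → ℝ) (A : Set ℝ) (r1 r2 : ℝ) : Prop :=
  succeqAI d1 A r1 r2 ∧ ¬ succeqAI d1 A r2 r1

/-- Assumption 1 (ranked incentives): `≽_AI` is complete on `R`, and strict dominance gives
strictly higher agent incentives everywhere. -/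
def RankedIncentives (d1 : ℝ → ℝ → ℝ) (A R : Set ℝ) : Prop :=
  (∀ r1 ∈ R, ∀ r2 ∈ R, succeqAI d1 A r1 r2 ∨ succeqAI d1 A r2 r1) ∧
  (∀ r1 ∈ R, ∀ r2 ∈ R, succAI d1 A r1 r2 → ∀ a ∈ A, d1 a r2 < d1 a r1)

section Contract

variable {uA : ℝ → ℝ → ℝ} {M : Set (ℝ × ℝ)} {s : ℝ}

lemma le_Vfun (hu : Continuous fun x => uA x s) (hM : IsCompact M) {p : ℝ × ℝ} (hp : p ∈ M) :
    uA p.1 s - p.2 ≤ Vfun uA M s :=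
  le_csSup (hM.bddAbove_image ((hu.comp continuous_fst).sub continuous_snd).continuousOn)
    (mem_image_of_mem _ hp)

lemma exists_Vfun_eq (hu : Continuous fun x => uA x s) (hM : IsCompact M) (hne : M.Nonempty) :
    ∃ p ∈ M, Vfun uA M s = uA p.1 s - p.2 := by
  obtain ⟨p, hp, hpV⟩ :=
    (hM.image ((hu.comp continuous_fst).sub continuous_snd)).sSup_mem (hne.image _)
  exact ⟨p, hp, hpV.symm⟩

lemma continuous_Vfun (huA : Continuous fun p : ℝ × ℝ => uA p.1 p.2) (hM : IsCompact M) :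
    Continuous (Vfun uA M) :=
  hM.continuous_sSup (f := fun s (p : ℝ × ℝ) => uA p.1 s - p.2)
    ((huA.comp (continuous_snd.fst.prodMk continuous_fst)).sub continuous_snd.snd)

lemma isClosed_setOf_exists_Vfun_eq (huA : Continuous fun p : ℝ × ℝ => uA p.1 p.2)
    (hM : IsCompact M) {K : Set (ℝ × ℝ)} (hK : IsCompact K) :
    IsClosed {s | ∃ p ∈ K, Vfun uA M s = uA p.1 s - p.2} := by
  have : CompactSpace K := isCompact_iff_compactSpace.1 hK
  have hgraph : IsClosed {q : ℝ × K | Vfun uA M q.1 = uA (q.2 : ℝ × ℝ).1 q.1 - (q.2 : ℝ × ℝ).2} :=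
    isClosed_eq ((continuous_Vfun huA hM).comp continuous_fst)
      ((huA.comp ((continuous_subtype_val.comp continuous_snd).fst.prodMk continuous_fst)).sub
        (continuous_subtype_val.comp continuous_snd).snd)
  convert isClosedMap_fst_of_compactSpace _ hgraph using 1
  ext s
  constructor
  · rintro ⟨p, hp, hpV⟩
    exact ⟨(s, ⟨p, hp⟩), hpV, rfl⟩
  · rintro ⟨⟨s, p, hp⟩, hpV, rfl⟩
    exact ⟨p, hp, hpV⟩

end Contract

section DualReply

variable {uA : ℝ → ℝ → ℝ} {R : Set ℝ} {M : Set (ℝ × ℝ)} {a r s : ℝ} {p : ℝ × ℝ}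

lemma dualReplies_le (huA : Continuous fun p : ℝ × ℝ => uA p.1 p.2) (hM : IsCompact M)
    (hR : IsCompact R) (hr : r ∈ dualReplies uA R M a) (hs : s ∈ R) :
    uA a s - Vfun uA M s ≤ uA a r - Vfun uA M r := by
  rw [hr.2]
  refine le_csSup (hR.bddAbove_image (Continuous.continuousOn ?_)) (mem_image_of_mem _ hs)
  exact (huA.comp (continuous_const.prodMk continuous_id)).sub (continuous_Vfun huA hM)

variable (huA : Continuous fun p : ℝ × ℝ => uA p.1 p.2) (hM : IsCompact M) (hR : IsCompact R)
  (hr : r ∈ dualReplies uA R M a) (hs : s ∈ R) (hp : p ∈ M) (hpV : Vfun uA M s = uA p.1 s - p.2)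
include huA hM hR hr hs hp hpV

lemma sub_le_of_dualReplies : uA p.1 r - uA p.1 s ≤ uA a r - uA a s := by
  have hdual := dualReplies_le huA hM hR hr hs
  have hfeas := le_Vfun (huA.uncurry_right (f := uA) r) hM hp
  linarith

lemma Vfun_eq_of_dualReplies (hle : uA p.1 s - uA p.1 r ≤ uA a s - uA a r) :
    Vfun uA M r = uA p.1 r - p.2 := by
  have hdual := dualReplies_le huA hM hR hr hs
  have hfeas := le_Vfun (huA.uncurry_right (f := uA) r) hM hp
  linarith

end DualReply

section Incentives

variable {uA d1 : ℝ → ℝ → ℝ} {D : Set ℝ} {r₁ r₂ : ℝ}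

lemma isClosed_setOf_succeqAI (hd1c : Continuous fun p : ℝ × ℝ => d1 p.1 p.2) {f g : ℝ → ℝ}
    (hf : Continuous f) (hg : Continuous g) : IsClosed {s | succeqAI d1 D (f s) (g s)} := by
  simp only [succeqAI, ofPred_forall]
  exact isClosed_biInter fun x _ =>
    isClosed_le (hd1c.comp (continuous_const.prodMk hg)) (hd1c.comp (continuous_const.prodMk hf))

variable (hd1 : ∀ a r : ℝ, HasDerivAt (fun x => uA x r) (d1 a r) a) (hD : Convex ℝ D)
include hd1 hD

lemma monotoneOn_sub_of_succeqAI (h : succeqAI d1 D r₁ r₂) :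
    MonotoneOn (fun x => uA x r₁ - uA x r₂) D :=
  monotoneOn_of_hasDerivWithinAt_nonneg hD
    (fun x _ => ((hd1 x r₁).sub (hd1 x r₂)).continuousAt.continuousWithinAt)
    (fun x _ => ((hd1 x r₁).sub (hd1 x r₂)).hasDerivWithinAt)
    (fun x hx => sub_nonneg.2 (h x (interior_subset hx)))

lemma strictMonoOn_sub_of_lt (h : ∀ x ∈ D, d1 x r₂ < d1 x r₁) :
    StrictMonoOn (fun x => uA x r₁ - uA x r₂) D :=
  strictMonoOn_of_hasDerivWithinAt_pos hD
    (fun x _ => ((hd1 x r₁).sub (hd1 x r₂)).continuousAt.continuousWithinAt)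
    (fun x _ => ((hd1 x r₁).sub (hd1 x r₂)).hasDerivWithinAt)
    (fun x hx => sub_pos.2 (h x (interior_subset hx)))

end Incentives

section RankedIncentives

variable {a0 abar rlo rhi a r r' : ℝ} {uA d1 : ℝ → ℝ → ℝ} {M : Set (ℝ × ℝ)}
  (huA : Continuous fun p : ℝ × ℝ => uA p.1 p.2)
  (hd1 : ∀ a r : ℝ, HasDerivAt (fun x => uA x r) (d1 a r) a)
  (hd1c : Continuous fun p : ℝ × ℝ => d1 p.1 p.2)
  (hRI : RankedIncentives d1 (Icc a0 abar) (Icc rlo rhi))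
  (hM : IsContract a0 abar M) (ha : a ∈ Icc a0 abar) (hr : r ∈ dualReplies uA (Icc rlo rhi) M a)
  (hr' : r' ∈ Icc rlo rhi)
include huA hd1 hd1c hRI hM ha hr hr'

lemma exists_le_Vfun_eq_of_succAI (hsucc : succAI d1 (Icc a0 abar) r r') :
    ∃ p ∈ M, p.1 ≤ a ∧ Vfun uA M r = uA p.1 r - p.2 := by
  obtain ⟨hne, hMc, hMA⟩ := hM
  have hrR := hr.1
  set E := {s | succeqAI d1 (Icc a0 abar) s r}
  set D := {s | ∃ p ∈ M ∩ {p | p.1 ≤ a}, Vfun uA M s = uA p.1 s - p.2}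
  have hcover : Icc rlo rhi ⊆ E ∪ D := by
    intro s hs
    refine or_iff_not_imp_left.2 fun hsr => ?_
    have hlt := hRI.2 r hrR s hs ⟨(hRI.1 r hrR s hs).resolve_right hsr, hsr⟩
    obtain ⟨p, hp, hpV⟩ := exists_Vfun_eq (huA.uncurry_right (f := uA) s) hMc hne
    have hex := sub_le_of_dualReplies huA hMc isCompact_Icc hr hs hp hpV
    refine ⟨p, ⟨hp, ?_⟩, hpV⟩
    exact ((strictMonoOn_sub_of_lt hd1 (convex_Icc a0 abar) hlt).le_iff_le (hMA hp).1 ha).1 hex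
  obtain ⟨s, hs, hsr, p, ⟨hp, hpa⟩, hpV⟩ := isPreconnected_closed_iff.1 isPreconnected_Icc E D
    (isClosed_setOf_succeqAI hd1c continuous_id continuous_const)
    (isClosed_setOf_exists_Vfun_eq huA hMc
      (hMc.inter_right (isClosed_le continuous_fst continuous_const)))
    hcover ⟨r, hrR, fun _ _ => le_rfl⟩ ⟨r', hr', (hcover hr').resolve_left hsucc.2⟩
  exact ⟨p, hp, hpa, Vfun_eq_of_dualReplies huA hMc isCompact_Icc hr hs hp hpV
    (monotoneOn_sub_of_succeqAI hd1 (convex_Icc a0 abar) hsr (hMA hp).1 ha hpa)⟩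

lemma exists_ge_Vfun_eq_of_succAI (hsucc : succAI d1 (Icc a0 abar) r' r) :
    ∃ p ∈ M, a ≤ p.1 ∧ Vfun uA M r = uA p.1 r - p.2 := by
  obtain ⟨hne, hMc, hMA⟩ := hM
  have hrR := hr.1
  set E := {s | succeqAI d1 (Icc a0 abar) r s}
  set D := {s | ∃ p ∈ M ∩ {p | a ≤ p.1}, Vfun uA M s = uA p.1 s - p.2}
  have hcover : Icc rlo rhi ⊆ E ∪ D := by
    intro s hs
    refine or_iff_not_imp_left.2 fun hrs => ?_
    have hlt := hRI.2 s hs r hrR ⟨(hRI.1 r hrR s hs).resolve_left hrs, hrs⟩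
    obtain ⟨p, hp, hpV⟩ := exists_Vfun_eq (huA.uncurry_right (f := uA) s) hMc hne
    have hex := sub_le_of_dualReplies huA hMc isCompact_Icc hr hs hp hpV
    refine ⟨p, ⟨hp, ?_⟩, hpV⟩
    refine ((strictMonoOn_sub_of_lt hd1 (convex_Icc a0 abar) hlt).le_iff_le ha (hMA hp).1).1 ?_
    linarith
  obtain ⟨s, hs, hrs, p, ⟨hp, hap⟩, hpV⟩ := isPreconnected_closed_iff.1 isPreconnected_Icc E D
    (isClosed_setOf_succeqAI hd1c continuous_const continuous_id)
    (isClosed_setOf_exists_Vfun_eq huA hMc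
      (hMc.inter_right (isClosed_le continuous_const continuous_fst)))
    hcover ⟨r, hrR, fun _ _ => le_rfl⟩ ⟨r', hr', (hcover hr').resolve_left hsucc.2⟩
  have hmono := monotoneOn_sub_of_succeqAI hd1 (convex_Icc a0 abar) hrs ha (hMA hp).1 hap
  exact ⟨p, hp, hap, Vfun_eq_of_dualReplies huA hMc isCompact_Icc hr hs hp hpV (by linarith)⟩

end RankedIncentives

theorem stmt6_general (a0 abar rlo rhi : ℝ)
    (uA : ℝ → ℝ → ℝ) (huA : Continuous fun p : ℝ × ℝ => uA p.1 p.2)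
    (d1 : ℝ → ℝ → ℝ)
    (hd1 : ∀ a r : ℝ, HasDerivAt (fun x => uA x r) (d1 a r) a)
    (hd1c : Continuous fun p : ℝ × ℝ => d1 p.1 p.2)
    (hRI : RankedIncentives d1 (Set.Icc a0 abar) (Set.Icc rlo rhi))
    (M : Set (ℝ × ℝ)) (hM : IsContract a0 abar M)
    (a : ℝ) (ha : a ∈ Set.Icc a0 abar)
    (r : ℝ) (hrDR : r ∈ dualReplies uA (Set.Icc rlo rhi) M a) :
    ((∃ r' ∈ Set.Icc rlo rhi, succAI d1 (Set.Icc a0 abar) r r') →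
      ∃ p ∈ M, p.1 ≤ a ∧ Vfun uA M r = uA p.1 r - p.2) ∧
    ((∃ r' ∈ Set.Icc rlo rhi, succAI d1 (Set.Icc a0 abar) r' r) →
      ∃ p ∈ M, a ≤ p.1 ∧ Vfun uA M r = uA p.1 r - p.2) :=
  ⟨fun ⟨_, hr', hsucc⟩ => exists_le_Vfun_eq_of_succAI huA hd1 hd1c hRI hM ha hrDR hr' hsucc,
    fun ⟨_, hr', hsucc⟩ => exists_ge_Vfun_eq_of_succAI huA hd1 hd1c hRI hM ha hrDR hr' hsucc⟩

/-- Under ranked incentives, if `r ∈ R(a;M)` and `r ≻_AI r'` for some `r' ∈ R`,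
then `V(r;M)` is attained at some plan `(ã,t̃) ∈ M` with `ã ≤ a`; symmetrically, if
`r' ≻_AI r` for some `r' ∈ R`, then `V(r;M)` is attained at some plan with `ã ≥ a`. -/
theorem stmt6 (a0 abar rlo rhi : ℝ) (hA : a0 < abar) (hR : rlo < rhi)
    (uA : ℝ → ℝ → ℝ) (huA : Continuous fun p : ℝ × ℝ => uA p.1 p.2)
    (d1 : ℝ → ℝ → ℝ)
    (hd1 : ∀ a r : ℝ, HasDerivAt (fun x => uA x r) (d1 a r) a)
    (hd1c : Continuous fun p : ℝ × ℝ => d1 p.1 p.2)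
    (hRI : RankedIncentives d1 (Set.Icc a0 abar) (Set.Icc rlo rhi))
    (M : Set (ℝ × ℝ)) (hM : IsContract a0 abar M)
    (a : ℝ) (ha : a ∈ Set.Icc a0 abar)
    (r : ℝ) (hrDR : r ∈ dualReplies uA (Set.Icc rlo rhi) M a) :
    ((∃ r' ∈ Set.Icc rlo rhi, succAI d1 (Set.Icc a0 abar) r r') →
      ∃ p ∈ M, p.1 ≤ a ∧ Vfun uA M r = uA p.1 r - p.2) ∧
    ((∃ r' ∈ Set.Icc rlo rhi, succAI d1 (Set.Icc a0 abar) r' r) →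
      ∃ p ∈ M, a ≤ p.1 ∧ Vfun uA M r = uA p.1 r - p.2) :=
  stmt6_general a0 abar rlo rhi uA huA d1 hd1 hd1c hRI M hM a ha r hrDR
end

section
/- Let A_F be the set of maximizers over A of U_F and A_P the set of maximizers over A of U_0 (both nonempty since U_F and U_0 are continuous on the compact interval A). Under Assumption 1 (ranked incentives), if r(a_F) ≻_AI r(a₀) for every a_F ∈ A_F, then for every a_F ∈ A_F and every a_P ∈ A_P one has r(a_P) ≽_AI r(a_F); that is, ∂₁u_A(a, r(a_F)) ≤ ∂₁u_A(a, r(a_P)) for all a ∈ A (incentive attenuation under robust implementation). -/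
open MeasureTheory Set

/-- The robust (full-implementation) value of inducing the pure outcome `a`:
`U_F(a) = u_P(a,r(a)) + ∫_{a₀}^{a} min(max_{a'' ∈ [a₀,a']} ∂₁u_A(a',r(a'')), ∂₁u_A(a',r(a))) da'`. -/
noncomputable def UFval (d1 uP : ℝ → ℝ → ℝ) (rBR : ℝ → ℝ) (a0 a : ℝ) : ℝ :=
  uP a (rBR a) +
    ∫ a' in a0..a,
      min (sSup ((fun a'' => d1 a' (rBR a'')) '' Set.Icc a0 a')) (d1 a' (rBR a))

/-- The partial-implementation value of inducing the pure outcome `a`: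
`U_0(a) = u_P(a,r(a)) + ∫_{a₀}^{a} ∂₁u_A(a',r(a)) da'`. -/
noncomputable def U0val (d1 uP : ℝ → ℝ → ℝ) (rBR : ℝ → ℝ) (a0 a : ℝ) : ℝ :=
  uP a (rBR a) + ∫ a' in a0..a, d1 a' (rBR a)

/-!
Writing `M(a') = max_{a'' ∈ [a₀,a']} ∂₁u_A(a', r(a''))` and
`e(a, a') = (∂₁u_A(a', r(a)) - M(a'))⁺`, one has `U_F(a) = U_0(a) - ∫_{a₀}^{a} e(a, ·)`.
Optimality of `a_F` for `U_F` and of `a_P` for `U_0` gives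
`∫_{a₀}^{a_F} e(a_F, ·) ≤ ∫_{a₀}^{a_P} e(a_P, ·)`. If `r(a_P) ⋡_AI r(a_F)`, ranked incentives give
`∂₁u_A(·, r(a_P)) < ∂₁u_A(·, r(a_F))` everywhere, so `e(a_P, ·)` vanishes beyond `a_F` and lies
below `e(a_F, ·)`, strictly near `a₀` since `M(a₀) = ∂₁u_A(a₀, r(a₀)) < ∂₁u_A(a₀, r(a_F))`;
this reverses the inequality strictly. Continuity of everything involved (of `r` by Berge's
maximum theorem) makes the integrals meaningful and turns pointwise strictness into strictness
of the integrals.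
-/

open Filter Topology

theorem continuous_of_hasDerivAt_fst {E F : Type*} [NormedAddCommGroup E] [NormedSpace ℝ E]
    [NormedAddCommGroup F] [NormedSpace ℝ F] {u d : ℝ → E → F}
    (hu : ContDiff ℝ 1 fun p : ℝ × E => u p.1 p.2)
    (hd : ∀ a r, HasDerivAt (fun x => u x r) (d a r) a) :
    Continuous fun p : ℝ × E => d p.1 p.2 := by
  have hfderiv :
      ∀ p : ℝ × E, d p.1 p.2 = fderiv ℝ (fun p : ℝ × E => u p.1 p.2) p (1, 0) := by
    rintro ⟨a, r⟩
    have hline : HasDerivAt (fun x => (x, r)) ((1 : ℝ), (0 : E)) a :=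
      (hasDerivAt_id a).prodMk (hasDerivAt_const a r)
    have hchain := (hu.differentiable one_ne_zero (a, r)).hasFDerivAt.comp_hasDerivAt a hline
    exact (hd a r).unique hchain
  simpa only [hfderiv] using (hu.continuous_fderiv one_ne_zero).clm_apply continuous_const

/-- Berge's maximum theorem. -/
theorem continuousOn_of_isUniqueMax {X Y α : Type*} [TopologicalSpace X] [TopologicalSpace Y]
    [LinearOrder α] [TopologicalSpace α] [OrderClosedTopology α]
    {u : X → Y → α} {m : X → Y} {s : Set X} {K : Set Y} (hK : IsCompact K)
    (hu : Continuous fun p : X × Y => u p.1 p.2)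
    (hm : ∀ x ∈ s, m x ∈ K ∧ ∀ y ∈ K, y ≠ m x → u x y < u x (m x)) :
    ContinuousOn m s := by
  intro x hx
  refine hK.tendsto_nhds_of_unique_mapClusterPt
    (eventually_nhdsWithin_of_forall fun x' hx' => (hm x' hx').1) fun y hyK hy => ?_
  obtain ⟨U, hUle, hmy⟩ := mapClusterPt_iff_ultrafilter.1 hy
  have hUx : Tendsto id (U : Filter X) (𝓝 x) := hUle.trans nhdsWithin_le_nhds
  have hys : ∀ y' ∈ K, u x y' ≤ u x y := fun y' hy' =>
    le_of_tendsto_of_tendsto ((hu.tendsto (x, y')).comp (hUx.prodMk_nhds tendsto_const_nhds))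
      ((hu.tendsto (x, y)).comp (hUx.prodMk_nhds hmy))
      (Eventually.filter_mono hUle (eventually_nhdsWithin_of_forall fun x' hx' => by
        rcases eq_or_ne y' (m x') with rfl | hne
        exacts [le_rfl, ((hm x' hx').2 y' hy' hne).le]))
  by_contra hne
  exact ((hm x hx).2 y hyK hne).not_ge (hys _ (hm x hx).1)

theorem continuousOn_sSup_image_Icc {h : ℝ → ℝ → ℝ} {a b : ℝ}
    (hh : ContinuousOn (fun p : ℝ × ℝ => h p.1 p.2) (Icc a b ×ˢ Icc a b)) :
    ContinuousOn (fun x => sSup (h x '' Icc a x)) (Icc a b) := by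
  rcases lt_or_ge b a with hba | hab
  · simp [Icc_eq_empty_of_lt hba]
  set c : ℝ → ℝ := fun x => projIcc a b hab x
  have hc : ∀ x ∈ Icc a b, c x = x := fun x hx => by simp [c, projIcc_of_mem hab hx]
  have hcc : Continuous c := continuous_subtype_val.comp continuous_projIcc
  have hcont : Continuous fun p : ℝ × ℝ => h (c p.1) (c (min p.2 p.1)) :=
    hh.comp_continuous
      ((hcc.comp continuous_fst).prodMk (hcc.comp (continuous_snd.min continuous_fst)))
      fun _ => ⟨(projIcc a b hab _).2, (projIcc a b hab _).2⟩
  -- `Icc a x` is reparametrized by the fixed compact set `Icc a b` via `t ↦ min t x`.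
  refine ((isCompact_Icc (a := a) (b := b)).continuous_sSup
    (f := fun x t => h (c x) (c (min t x))) hcont).continuousOn.congr fun x hx => ?_
  congr 1
  ext z
  simp only [mem_image]
  constructor
  · rintro ⟨t, ht, rfl⟩
    exact ⟨t, ⟨ht.1, ht.2.trans hx.2⟩, by
      rw [min_eq_left ht.2, hc x hx, hc t ⟨ht.1, ht.2.trans hx.2⟩]⟩
  · rintro ⟨t, ht, rfl⟩
    exact ⟨min t x, ⟨le_min ht.1 hx.1, min_le_right _ _⟩, by
      rw [hc x hx, hc _ ⟨le_min ht.1 hx.1, (min_le_right _ _).trans hx.2⟩]⟩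

theorem RankedIncentives.lt_of_not_succeqAI {d1 : ℝ → ℝ → ℝ} {A R : Set ℝ} {r1 r2 : ℝ}
    (hRI : RankedIncentives d1 A R) (h1 : r1 ∈ R) (h2 : r2 ∈ R)
    (h : ¬ succeqAI d1 A r1 r2) : ∀ a ∈ A, d1 a r1 < d1 a r2 :=
  hRI.2 r2 h2 r1 h1 ⟨(hRI.1 r1 h1 r2 h2).resolve_left h, h⟩

/-- The term `max_{a'' ∈ [a₀,a']} ∂₁u_A(a', r(a''))` of `U_F`. -/
noncomputable def runningMaxIncentive (d1 : ℝ → ℝ → ℝ) (rBR : ℝ → ℝ) (a0 a' : ℝ) : ℝ :=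
  sSup ((fun a'' => d1 a' (rBR a'')) '' Icc a0 a')

noncomputable def incentiveExcess (d1 : ℝ → ℝ → ℝ) (rBR : ℝ → ℝ) (a0 a a' : ℝ) : ℝ :=
  max (d1 a' (rBR a) - runningMaxIncentive d1 rBR a0 a') 0

section IncentiveExcess

variable {d1 : ℝ → ℝ → ℝ} {rBR : ℝ → ℝ} {a0 abar a a' b : ℝ}

theorem runningMaxIncentive_self : runningMaxIncentive d1 rBR a0 a0 = d1 a0 (rBR a0) := by
  simp [runningMaxIncentive]

theorem incentiveExcess_nonneg : 0 ≤ incentiveExcess d1 rBR a0 a a' :=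
  le_max_right _ _

theorem incentiveExcess_mono (h : d1 a' (rBR a) ≤ d1 a' (rBR b)) :
    incentiveExcess d1 rBR a0 a a' ≤ incentiveExcess d1 rBR a0 b a' :=
  max_le_max_right 0 (sub_le_sub_right h _)

theorem incentiveExcess_lt (h : d1 a' (rBR a) < d1 a' (rBR b))
    (hb : runningMaxIncentive d1 rBR a0 a' < d1 a' (rBR b)) :
    incentiveExcess d1 rBR a0 a a' < incentiveExcess d1 rBR a0 b a' :=
  lt_max_of_lt_left <| max_lt (sub_lt_sub_right h _) (sub_pos.2 hb)

theorem incentiveExcess_eq_zero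
    (hbdd : BddAbove ((fun a'' => d1 a' (rBR a'')) '' Icc a0 a')) (hb : b ∈ Icc a0 a')
    (h : d1 a' (rBR a) ≤ d1 a' (rBR b)) : incentiveExcess d1 rBR a0 a a' = 0 :=
  max_eq_right <| sub_nonpos.2 <| h.trans <| le_csSup hbdd (mem_image_of_mem _ hb)

theorem continuousOn_incentiveExcess
    (hh : ContinuousOn (fun p : ℝ × ℝ => d1 p.1 (rBR p.2)) (Icc a0 abar ×ˢ Icc a0 abar))
    (ha : a ∈ Icc a0 abar) :
    ContinuousOn (incentiveExcess d1 rBR a0 a) (Icc a0 abar) :=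
  ContinuousOn.sup
    ((hh.comp (continuousOn_id.prodMk continuousOn_const) fun _ hx => ⟨hx, ha⟩).sub
      (continuousOn_sSup_image_Icc (h := fun x y => d1 x (rBR y)) hh))
    continuousOn_const

theorem UFval_eq_U0val_sub_integral_incentiveExcess (uP : ℝ → ℝ → ℝ)
    (hh : ContinuousOn (fun p : ℝ × ℝ => d1 p.1 (rBR p.2)) (Icc a0 abar ×ˢ Icc a0 abar))
    (ha : a ∈ Icc a0 abar) :
    UFval d1 uP rBR a0 a =
      U0val d1 uP rBR a0 a - ∫ a' in a0..a, incentiveExcess d1 rBR a0 a a' := by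
  have hsub : Icc a0 a ⊆ Icc a0 abar := Icc_subset_Icc_right ha.2
  have hd : IntervalIntegrable (fun a' => d1 a' (rBR a)) volume a0 a :=
    ContinuousOn.intervalIntegrable_of_Icc ha.1 <|
      hh.comp (continuousOn_id.prodMk continuousOn_const) fun _ hx => ⟨hsub hx, ha⟩
  have he : IntervalIntegrable (incentiveExcess d1 rBR a0 a) volume a0 a :=
    ((continuousOn_incentiveExcess hh ha).mono hsub).intervalIntegrable_of_Icc ha.1
  rw [UFval, U0val, add_sub_assoc, ← intervalIntegral.integral_sub hd he]
  congr 2 with a'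
  rw [incentiveExcess, runningMaxIncentive]
  rcases le_total (sSup ((fun a'' => d1 a' (rBR a'')) '' Icc a0 a')) (d1 a' (rBR a)) with h | h
  · simp [h]
  · simp [h, sub_nonpos.2 h]

theorem integral_incentiveExcess_le_of_le
    (hh : ContinuousOn (fun p : ℝ × ℝ => d1 p.1 (rBR p.2)) (Icc a0 abar ×ˢ Icc a0 abar))
    {aP aF : ℝ} (haP : aP ∈ Icc a0 abar) (haF : aF ∈ Icc a0 abar)
    (hle : ∀ a' ∈ Icc a0 abar, d1 a' (rBR aP) ≤ d1 a' (rBR aF)) :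
    ∫ a' in a0..aP, incentiveExcess d1 rBR a0 aP a' ≤
      ∫ a' in a0..aF, incentiveExcess d1 rBR a0 aP a' := by
  have hint : ∀ x ∈ Icc a0 abar, IntervalIntegrable (incentiveExcess d1 rBR a0 aP) volume a0 x :=
    fun x hx => ((continuousOn_incentiveExcess hh haP).mono
      (Icc_subset_Icc_right hx.2)).intervalIntegrable_of_Icc hx.1
  rcases le_total aP aF with h | h
  · exact intervalIntegral.integral_mono_interval le_rfl haP.1 h
      (ae_of_all _ fun _ => incentiveExcess_nonneg) (hint aF haF)
  · -- Past `aF`, the running maximum already contains the incentive `d1 a' (rBR aF)`.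
    have hzero : ∫ a' in aF..aP, incentiveExcess d1 rBR a0 aP a' = 0 := by
      refine (intervalIntegral.integral_congr fun x hx => ?_).trans intervalIntegral.integral_zero
      rw [uIcc_of_le h] at hx
      have hxA : x ∈ Icc a0 abar := ⟨haF.1.trans hx.1, hx.2.trans haP.2⟩
      refine incentiveExcess_eq_zero ?_ ⟨haF.1, hx.1⟩ (hle x hxA)
      exact (isCompact_Icc.bddAbove_image <| hh.comp (continuousOn_const.prodMk continuousOn_id)
        fun _ hy => ⟨hxA, hy.1, hy.2.trans hxA.2⟩)
    rw [← intervalIntegral.integral_add_adjacent_intervals (hint aF haF)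
      ((hint aP haP).symm.trans (hint aF haF)).symm, hzero, add_zero]

theorem integral_incentiveExcess_lt_of_lt
    (hh : ContinuousOn (fun p : ℝ × ℝ => d1 p.1 (rBR p.2)) (Icc a0 abar ×ˢ Icc a0 abar))
    {aP aF : ℝ} (haP : aP ∈ Icc a0 abar) (haF : aF ∈ Icc a0 abar)
    (hlt : ∀ a' ∈ Icc a0 abar, d1 a' (rBR aP) < d1 a' (rBR aF))
    (h0 : d1 a0 (rBR a0) < d1 a0 (rBR aF)) :
    ∫ a' in a0..aF, incentiveExcess d1 rBR a0 aP a' <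
      ∫ a' in a0..aF, incentiveExcess d1 rBR a0 aF a' := by
  have ha0F : a0 < aF := haF.1.lt_of_ne <| by rintro rfl; exact h0.false
  have hsub : Icc a0 aF ⊆ Icc a0 abar := Icc_subset_Icc_right haF.2
  have ha0 : a0 ∈ Icc a0 abar := ⟨le_rfl, haF.1.trans haF.2⟩
  refine intervalIntegral.integral_lt_integral_of_continuousOn_of_le_of_exists_lt ha0F
    ((continuousOn_incentiveExcess hh haP).mono hsub)
    ((continuousOn_incentiveExcess hh haF).mono hsub)
    (fun x hx => incentiveExcess_mono (hlt x (hsub (Ioc_subset_Icc_self hx))).le)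
    ⟨a0, left_mem_Icc.2 ha0F.le, incentiveExcess_lt (hlt a0 ha0) ?_⟩
  rwa [runningMaxIncentive_self]

end IncentiveExcess

theorem stmt16_general (a0 abar rlo rhi : ℝ)
    (uA uO uP : ℝ → ℝ → ℝ)
    (huA : ContDiff ℝ 2 fun p : ℝ × ℝ => uA p.1 p.2)
    (huO : ContDiff ℝ 2 fun p : ℝ × ℝ => uO p.1 p.2)
    (d1 : ℝ → ℝ → ℝ)
    (hd1 : ∀ a r : ℝ, HasDerivAt (fun x => uA x r) (d1 a r) a)
    (hRI : RankedIncentives d1 (Set.Icc a0 abar) (Set.Icc rlo rhi))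
    (rBR : ℝ → ℝ)
    (hrBR : ∀ a ∈ Set.Icc a0 abar, rBR a ∈ Set.Icc rlo rhi ∧
      ∀ r' ∈ Set.Icc rlo rhi, r' ≠ rBR a → uO a r' < uO a (rBR a))
    (hstrict : ∀ aF ∈ Set.Icc a0 abar,
      IsMaxOn (UFval d1 uP rBR a0) (Set.Icc a0 abar) aF →
      succAI d1 (Set.Icc a0 abar) (rBR aF) (rBR a0)) :
    ∀ aF ∈ Set.Icc a0 abar, IsMaxOn (UFval d1 uP rBR a0) (Set.Icc a0 abar) aF →
    ∀ aP ∈ Set.Icc a0 abar, IsMaxOn (U0val d1 uP rBR a0) (Set.Icc a0 abar) aP →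
      succeqAI d1 (Set.Icc a0 abar) (rBR aP) (rBR aF) := by
  intro aF haF maxF aP haP maxP
  by_contra hnot
  have ha0 : a0 ∈ Icc a0 abar := left_mem_Icc.2 (haF.1.trans haF.2)
  have hlt := hRI.lt_of_not_succeqAI (hrBR aP haP).1 (hrBR aF haF).1 hnot
  have hlt0 := hRI.2 _ (hrBR aF haF).1 _ (hrBR a0 ha0).1 (hstrict aF haF maxF) a0 ha0
  have hh : ContinuousOn (fun p : ℝ × ℝ => d1 p.1 (rBR p.2)) (Icc a0 abar ×ˢ Icc a0 abar) :=
    (continuous_of_hasDerivAt_fst (huA.of_le one_le_two) hd1).comp_continuousOn <|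
      continuousOn_fst.prodMk <|
        (continuousOn_of_isUniqueMax isCompact_Icc huO.continuous hrBR).comp continuousOn_snd
          fun _ hp => hp.2
  have hF := maxF haP
  have hP := maxP haF
  simp only [mem_ofPred_eq, UFval_eq_U0val_sub_integral_incentiveExcess uP hh haP,
    UFval_eq_U0val_sub_integral_incentiveExcess uP hh haF] at hF hP
  linarith [integral_incentiveExcess_le_of_le hh haP haF fun a' ha' => (hlt a' ha').le,
    integral_incentiveExcess_lt_of_lt hh haP haF hlt hlt0]

/-- Incentive attenuation: under ranked incentives, if `r(a_F) ≻_AI r(a₀)` for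
every maximizer `a_F` of `U_F`, then for every maximizer `a_F` of `U_F` and every maximizer
`a_P` of `U_0` one has `r(a_P) ≽_AI r(a_F)`, i.e. `∂₁u_A(a,r(a_F)) ≤ ∂₁u_A(a,r(a_P))` for
all `a ∈ A`. -/
theorem stmt16 (a0 abar rlo rhi : ℝ) (hA : a0 < abar) (hR : rlo < rhi)
    (uA uO uP : ℝ → ℝ → ℝ)
    (huA : ContDiff ℝ 2 fun p : ℝ × ℝ => uA p.1 p.2)
    (huO : ContDiff ℝ 2 fun p : ℝ × ℝ => uO p.1 p.2)
    (huP : ContDiff ℝ 2 fun p : ℝ × ℝ => uP p.1 p.2)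
    (hconc : ∀ a ∈ Set.Icc a0 abar, StrictConcaveOn ℝ (Set.Icc rlo rhi) (fun r => uO a r))
    (d1 : ℝ → ℝ → ℝ)
    (hd1 : ∀ a r : ℝ, HasDerivAt (fun x => uA x r) (d1 a r) a)
    (hRI : RankedIncentives d1 (Set.Icc a0 abar) (Set.Icc rlo rhi))
    (rBR : ℝ → ℝ)
    (hrBR : ∀ a ∈ Set.Icc a0 abar, rBR a ∈ Set.Icc rlo rhi ∧
      ∀ r' ∈ Set.Icc rlo rhi, r' ≠ rBR a → uO a r' < uO a (rBR a))
    (hstrict : ∀ aF ∈ Set.Icc a0 abar,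
      IsMaxOn (UFval d1 uP rBR a0) (Set.Icc a0 abar) aF →
      succAI d1 (Set.Icc a0 abar) (rBR aF) (rBR a0)) :
    ∀ aF ∈ Set.Icc a0 abar, IsMaxOn (UFval d1 uP rBR a0) (Set.Icc a0 abar) aF →
    ∀ aP ∈ Set.Icc a0 abar, IsMaxOn (U0val d1 uP rBR a0) (Set.Icc a0 abar) aP →
      succeqAI d1 (Set.Icc a0 abar) (rBR aP) (rBR aF) :=
  stmt16_general a0 abar rlo rhi uA uO uP huA huO d1 hd1 hRI rBR hrBR hstrict
end
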